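/- Let n ≥ 2 and let S_n(Sym_n) be the monoid presented by generators x_1,…,x_n and relations x_{σ(1)}x_{σ(2)}⋯x_{σ(n)} = x_1x_2⋯x_n for all σ ∈ Sym_n. Then for every m ≥ 1 and every i with 2 ≤ i ≤ n, the identity x_i·x_1^m·x_ε = x_1^m·x_ε·x_i holds in S_n(Sym_n), where x_ε = x_1x_2⋯x_n. -/

import Mathlib

/-- The word `x_{σ(1)} x_{σ(2)} ⋯ x_{σ(n)}` in the free monoid on `n` generators
(generator `x_j` is indexed by `j-1 : Fin n`). -/
def permWord {n : ℕ} (σ : Equiv.Perm (Fin n)) : FreeMonoid (Fin n) :=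
  FreeMonoid.ofList (List.ofFn fun i => σ i)

/-- The word `x_ε = x_1 x_2 ⋯ x_n`. -/
def epsWord (n : ℕ) : FreeMonoid (Fin n) :=
  FreeMonoid.ofList (List.ofFn fun i : Fin n => i)

/-- The defining relations `x_{σ(1)} ⋯ x_{σ(n)} = x_1 ⋯ x_n`, `σ ∈ Sym_n`. -/
def symRel (n : ℕ) : FreeMonoid (Fin n) → FreeMonoid (Fin n) → Prop :=
  fun a b => ∃ σ : Equiv.Perm (Fin n), a = permWord σ ∧ b = epsWord n

/-- The canonical projection from the free monoid onto `S_n(Sym_n)`. -/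
def proj (n : ℕ) : FreeMonoid (Fin n) →* PresentedMonoid (symRel n) :=
  PresentedMonoid.mk (symRel n)

/-- `u` contains a subword of the form `x_{σ(1)} ⋯ x_{σ(n)}` for some `σ ∈ Sym_n`. -/
def HasPermSubword {n : ℕ} (u : FreeMonoid (Fin n)) : Prop :=
  ∃ (σ : Equiv.Perm (Fin n)) (a b : FreeMonoid (Fin n)), u = a * permWord σ * b

/-- The word `x_1^{m_1} · x_ε · x_2^{m_2} ⋯ x_n^{m_n}` (0-indexed: `m i` is the
exponent of generator `i`). -/
def normalWord (n : ℕ) (h : 0 < n) (m : Fin n → ℕ) : FreeMonoid (Fin n) :=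
  FreeMonoid.ofList (List.replicate (m ⟨0, h⟩) ⟨0, h⟩) * epsWord n *
    FreeMonoid.ofList (((List.finRange n).drop 1).flatMap fun i => List.replicate (m i) i)

/-!
The element `x_ε` is central: writing `x_ε = w x_j` with `x_j w` also a permutation word gives
`x_j x_ε = (x_j w) x_j = x_ε x_j`. Likewise any two generators commute up to `x_ε`: with
`x_ε = r x_b x_a` and `x_a x_b r` a permutation word, `x_a x_b x_ε = x_ε x_b x_a = x_b x_a x_ε`.
Together these make `u v x_ε = v u x_ε` for all words `u, v`, so
`x_i x_1^m x_ε = x_1^m x_i x_ε = x_1^m x_ε x_i`.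
-/

theorem mul_mul_mul_comm_of_commute {M : Type*} [Monoid M] {e x₁ x₂ y : M} (he : Commute x₂ e)
    (h₁ : x₁ * y * e = y * x₁ * e) (h₂ : x₂ * y * e = y * x₂ * e) :
    x₁ * x₂ * y * e = y * (x₁ * x₂) * e :=
  calc x₁ * x₂ * y * e = x₁ * (x₂ * y * e) := by simp only [mul_assoc]
    _ = x₁ * y * e * x₂ := by rw [h₂, mul_assoc y, he.eq]; simp only [mul_assoc]
    _ = y * (x₁ * x₂) * e := by rw [h₁, mul_assoc _ e, ← he.eq]; simp only [mul_assoc]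

namespace FreeMonoid

variable {α M : Type*} [Monoid M]

theorem commute_map_of_forall_of {f : FreeMonoid α →* M} {e : M} (he : ∀ a, Commute (f (of a)) e)
    (u : FreeMonoid α) : Commute (f u) e := by
  induction u using FreeMonoid.inductionOn' with
  | one => simp
  | of_mul a u ih => simpa using (he a).mul_left ih

theorem mul_mul_comm_of_forall_of {f : FreeMonoid α →* M} {e : M} (he : ∀ a, Commute (f (of a)) e)
    (h : ∀ a b, f (of a) * f (of b) * e = f (of b) * f (of a) * e) (u v : FreeMonoid α) :
    f u * f v * e = f v * f u * e := by
  have hgen (a : α) (v : FreeMonoid α) : f (of a) * f v * e = f v * f (of a) * e := by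
    induction v using FreeMonoid.inductionOn' with
    | one => simp
    | of_mul b v ih =>
      rw [map_mul, eq_comm]
      exact mul_mul_mul_comm_of_commute (commute_map_of_forall_of he v) (h b a) ih.symm
  induction u using FreeMonoid.inductionOn' with
  | one => simp
  | of_mul a u ih =>
    rw [map_mul]
    exact mul_mul_mul_comm_of_commute (commute_map_of_forall_of he u) (hgen a v) ih

end FreeMonoid

open FreeMonoid

theorem proj_ofList_eq_epsWord {n : ℕ} {l : List (Fin n)} (hl : l.Perm (List.finRange n)) :
    proj n (ofList l) = proj n (epsWord n) := by
  have hlen : n = l.length := by simp [hl.length_eq]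
  let σ : Equiv.Perm (Fin n) := (finCongr hlen).trans <|
    List.Nodup.getEquivOfForallMemList l (hl.nodup_iff.2 (List.nodup_finRange n))
      fun x => hl.mem_iff.2 (List.mem_finRange x)
  have hσ : permWord σ = ofList l := by
    simp only [permWord, σ]
    congr 1
    exact List.ext_getElem (by simp [hlen]) (by simp)
  exact Quotient.sound (ConGen.Rel.of _ _ ⟨σ, hσ.symm, rfl⟩)

theorem commute_proj_of_epsWord {n : ℕ} (a : Fin n) :
    Commute (proj n (of a)) (proj n (epsWord n)) := by
  set l := (List.finRange n).erase a
  have hl : (a :: l).Perm (List.finRange n) := (List.perm_cons_erase (List.mem_finRange a)).symm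
  calc proj n (of a) * proj n (epsWord n)
      = proj n (of a) * proj n (ofList (l ++ [a])) := by
        rw [proj_ofList_eq_epsWord (List.perm_append_singleton a l |>.trans hl)]
    _ = proj n (ofList (a :: l)) * proj n (of a) := by simp only [← map_mul]; rfl
    _ = proj n (epsWord n) * proj n (of a) := by rw [proj_ofList_eq_epsWord hl]

theorem proj_of_mul_of_mul_epsWord_comm {n : ℕ} (a b : Fin n) :
    proj n (of a) * proj n (of b) * proj n (epsWord n) =
      proj n (of b) * proj n (of a) * proj n (epsWord n) := by
  rcases eq_or_ne a b with rfl | hab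
  · rfl
  set r := ((List.finRange n).erase a).erase b
  have hl : (a :: b :: r).Perm (List.finRange n) :=
    ((List.perm_cons_erase (List.mem_erase_of_ne hab.symm |>.2 (List.mem_finRange b))).cons a).symm
      |>.trans (List.perm_cons_erase (List.mem_finRange a)).symm
  calc proj n (of a) * proj n (of b) * proj n (epsWord n)
      = proj n (of a) * proj n (of b) * proj n (ofList (r ++ [b, a])) := by
        rw [proj_ofList_eq_epsWord ((List.perm_append_comm.trans (List.Perm.swap a b r)).trans hl)]
    _ = proj n (ofList (a :: b :: r)) * proj n (of b) * proj n (of a) := by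
        simp only [← map_mul]
        congr 1
        simp [ofList_cons, ofList_append, mul_assoc]
    _ = proj n (of b) * proj n (of a) * proj n (epsWord n) := by
        rw [proj_ofList_eq_epsWord hl, (commute_proj_of_epsWord b).symm.eq, mul_assoc,
          (commute_proj_of_epsWord a).symm.eq, ← mul_assoc]

/-- For every `m ≥ 1` and every generator `x_i` with `2 ≤ i ≤ n` (0-indexed: `i.val ≠ 0`),
`x_i · x_1^m · x_ε = x_1^m · x_ε · x_i` holds in `S_n(Sym_n)`. -/
theorem xi_x1pow_eps_comm (n : ℕ) (hn : 2 ≤ n) (m : ℕ)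
    (i : Fin n) :
    proj n (FreeMonoid.of i) * proj n (FreeMonoid.of (⟨0, by omega⟩ : Fin n)) ^ m *
        proj n (epsWord n) =
      proj n (FreeMonoid.of (⟨0, by omega⟩ : Fin n)) ^ m * proj n (epsWord n) *
        proj n (FreeMonoid.of i) := by
  rw [← map_pow, mul_mul_comm_of_forall_of commute_proj_of_epsWord proj_of_mul_of_mul_epsWord_comm,
    mul_assoc, (commute_map_of_forall_of commute_proj_of_epsWord _).eq, mul_assoc]
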